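/- arXiv:math/9209203 — 8 statements merged into one kernel-verified Lean document; each statement's English description precedes it below -/
import Mathlib

section
/- If H is a subgroup of P = ∏_{n∈ℕ} ℤ of countably infinite rank, then there exist a group endomorphism f of P and positive integers (d_n)_{n∈ℕ} such that f(H) contains the subgroup ⊕_n d_n ℤ of S = ⊕_{n∈ℕ} ℤ (the set of finitely supported sequences x with d_n dividing x(n) for all n). -/
/-!
Since `H` has infinite rank, no restriction of `H` to finitely many coordinates is injective, so
`H` has nonzero elements vanishing on any prescribed finite set of coordinates. Choosing them
one after another gives `u₀, u₁, … ∈ H` and coordinates `n₀, n₁, …` with `u k (n k) ≠ 0` and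
`u k (n i) = 0` for `i < k`: the matrices `M j = (u k (n i))_{i, k ≤ j}` are lower triangular
with nonzero determinant. Reading coordinate `j` of `f x` off the last row of `adj (M j)` applied
to `(x (n i))_{i ≤ j}` gives an endomorphism with `f (u k) = det (M k) • δ_k`, so `f(H)` contains
`⊕ det (M k) ℤ`.
-/

open Cardinal Matrix

theorem AddSubgroup.mem_of_forall_single_mem {ι : Type*} [DecidableEq ι]
    {K : AddSubgroup (ι → ℤ)} {e : ι → ℤ} (he : ∀ k, Pi.single k (e k) ∈ K) {x : ι → ℤ}
    (hx : (Function.support x).Finite) (hdvd : ∀ k, e k ∣ x k) : x ∈ K := by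
  choose c hc using hdvd
  have hsum : x = ∑ k ∈ hx.toFinset, c k • Pi.single k (e k) := by
    funext j
    simp only [Finset.sum_apply, Pi.smul_apply, Pi.single_apply, smul_eq_mul, mul_ite, mul_zero,
      Finset.sum_ite_eq, Set.Finite.mem_toFinset, Function.mem_support]
    split_ifs with hj
    · rw [hc, mul_comm]
    · exact not_not.mp hj
  rw [hsum]
  exact K.sum_mem fun k _ => K.zsmul_mem (he k) (c k)

theorem AddSubgroup.exists_ne_zero_forall_mem_eq_zero {ι : Type*} {H : AddSubgroup (ι → ℤ)}
    (hH : ℵ₀ ≤ Module.rank ℤ H) (s : Finset ι) : ∃ h ∈ H, h ≠ 0 ∧ ∀ i ∈ s, h i = 0 := by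
  by_contra! hc
  let restrict : H →ₗ[ℤ] (s → ℤ) :=
    LinearMap.funLeft ℤ ℤ ((↑) : s → ι) ∘ₗ H.subtype.toIntLinearMap
  have hinj : Function.Injective restrict := by
    rw [← LinearMap.ker_eq_bot, LinearMap.ker_eq_bot']
    intro h hh
    by_contra hne
    obtain ⟨i, hi, hhi⟩ := hc h h.2 (by simpa using hne)
    exact hhi (congrFun hh ⟨i, hi⟩)
  have hle := LinearMap.rank_le_of_injective restrict hinj
  rw [rank_fun'] at hle
  exact natCast_lt_aleph0.not_ge (hH.trans hle)

theorem AddSubgroup.exists_lowerTriangular_family {H : AddSubgroup (ℕ → ℤ)}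
    (hH : ℵ₀ ≤ Module.rank ℤ H) :
    ∃ (u : ℕ → ℕ → ℤ) (n : ℕ → ℕ), (∀ k, u k ∈ H) ∧ (∀ k, u k (n k) ≠ 0) ∧
      ∀ ⦃i k⦄, i < k → u k (n i) = 0 := by
  choose v hvH hv0 hvlt using fun m => H.exists_ne_zero_forall_mem_eq_zero hH (Finset.range m)
  choose t ht using fun m => Function.ne_iff.mp (hv0 m)
  have hmt : ∀ m, m ≤ t m := fun m => not_lt.mp fun hlt => ht m (hvlt m _ (by simpa using hlt))
  -- `v (N k)` vanishes below `N k`, and its pivot `t (N k)` lies below `N (k + 1)`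
  let N : ℕ → ℕ := fun k => Nat.rec 0 (fun _ p => t p + 1) k
  have hN : StrictMono N := strictMono_nat_of_lt_succ fun k => Nat.lt_succ_of_le (hmt (N k))
  refine ⟨fun k => v (N k), fun k => t (N k), fun k => hvH _, fun k => ht _, fun i k hik => ?_⟩
  refine hvlt _ _ (Finset.mem_range.mpr ?_)
  exact (Nat.lt_succ_self _).trans_le (hN.monotone (Nat.succ_le_of_lt hik))

namespace LowerTriangularFamily

variable (u : ℕ → ℕ → ℤ) (n : ℕ → ℕ)

def pivotMatrix (j : ℕ) : Matrix (Fin (j + 1)) (Fin (j + 1)) ℤ :=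
  Matrix.of fun i k => u k (n i)

def adjugateMap : (ℕ → ℤ) →+ (ℕ → ℤ) where
  toFun x j := ∑ i, adjugate (pivotMatrix u n j) (Fin.last j) i * x (n i)
  map_zero' := by funext j; simp
  map_add' x y := by funext j; simp [mul_add, Finset.sum_add_distrib]

variable {u n}

theorem pivotMatrix_isLowerTriangular (htri : ∀ ⦃i k⦄, i < k → u k (n i) = 0) (j : ℕ) :
    (pivotMatrix u n j).IsLowerTriangular :=
  fun _ _ h => htri h

theorem det_pivotMatrix_ne_zero (hdiag : ∀ k, u k (n k) ≠ 0)
    (htri : ∀ ⦃i k⦄, i < k → u k (n i) = 0) (j : ℕ) : (pivotMatrix u n j).det ≠ 0 := by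
  rw [det_of_isLowerTriangular _ (pivotMatrix_isLowerTriangular htri j)]
  exact Finset.prod_ne_zero_iff.mpr fun i _ => hdiag i

theorem adjugateMap_apply (htri : ∀ ⦃i k⦄, i < k → u k (n i) = 0) (k : ℕ) :
    adjugateMap u n (u k) = Pi.single k (pivotMatrix u n k).det := by
  funext j
  rcases lt_or_ge j k with hjk | hkj
  · rw [Pi.single_eq_of_ne hjk.ne]
    change ∑ i : Fin (j + 1), _ * u k (n i) = 0
    refine Finset.sum_eq_zero fun i _ => ?_
    rw [htri ((Nat.lt_succ_iff.mp i.isLt).trans_lt hjk), mul_zero]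
  · have hcol : adjugateMap u n (u k) j = (adjugate (pivotMatrix u n j) * pivotMatrix u n j)
        (Fin.last j) ⟨k, Nat.lt_succ_of_le hkj⟩ := rfl
    rw [hcol, adjugate_mul, Matrix.smul_apply, one_apply]
    rcases hkj.eq_or_lt with rfl | hlt
    · simp [Fin.ext_iff]
    · simp [Fin.ext_iff, hlt.ne']

end LowerTriangularFamily

open LowerTriangularFamily

theorem stmt_5 (H : AddSubgroup (ℕ → ℤ)) (hH : Module.rank ℤ H = ℵ₀) :
    ∃ (f : (ℕ → ℤ) →+ (ℕ → ℤ)) (d : ℕ → ℕ), (∀ n, 0 < d n) ∧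
      ∀ x : ℕ → ℤ, (Function.support x).Finite → (∀ n, (d n : ℤ) ∣ x n) →
        x ∈ H.map f := by
  obtain ⟨u, n, hu, hdiag, htri⟩ := H.exists_lowerTriangular_family hH.ge
  refine ⟨adjugateMap u n, fun j => (pivotMatrix u n j).det.natAbs,
    fun j => Int.natAbs_pos.mpr (det_pivotMatrix_ne_zero hdiag htri j), fun x hx hdvd => ?_⟩
  refine AddSubgroup.mem_of_forall_single_mem (fun k => ?_) hx fun k => Int.natAbs_dvd.mp (hdvd k)
  rw [← adjugateMap_apply htri k]
  exact AddSubgroup.mem_map_of_mem _ (hu k)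
end

section
/- Let H ⊆ P = ∏_{n∈ℕ} ℤ and suppose d·e_0 ∈ H, where d is the minimum over nonzero h ∈ H of the gcd of the components of h, and e_0 is the first standard unit vector. Then every b ∈ H has b(0) divisible by d, and consequently H = ⟨d·e_0⟩ ⊕ H₁ where H₁ = {x ∈ H : x(0) = 0}. -/
/-!
Every family of integers has a gcd, namely the generator of the ideal its entries span, and by
minimality of `d` it is at least `d` for any nonzero `h ∈ H`; hence `d ≤ |h 0|` whenever
`h 0 ≠ 0`. Subtracting from `b ∈ H` the multiple `(b 0 / d) • d e₀` gives an element of `H` with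
`0`-th entry `b 0 % d < d`, which must therefore vanish. Once `d ∣ b 0` on `H`, each `b ∈ H` splits
as `(b 0 / d) • d e₀` plus an element of the kernel of evaluation at `0`, and `⟨d e₀⟩` meets that
kernel trivially because `d ≠ 0`.
-/

theorem Int.exists_gcd_of_family {ι : Type*} (f : ι → ℤ) :
    ∃ g : ℕ, (∀ i, (g : ℤ) ∣ f i) ∧ ∀ m : ℕ, (∀ i, (m : ℤ) ∣ f i) → m ∣ g := by
  set I := Ideal.span (Set.range f)
  have hI : I = Ideal.span {Submodule.IsPrincipal.generator I} :=
    (Ideal.span_singleton_generator I).symm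
  refine ⟨(Submodule.IsPrincipal.generator I).natAbs, fun i => ?_, fun m hm => ?_⟩
  · have : f i ∈ I := Ideal.subset_span ⟨i, rfl⟩
    rw [hI, Ideal.mem_span_singleton] at this
    exact Int.natAbs_dvd.mpr this
  · have hle : I ≤ Ideal.span {(m : ℤ)} := by
      rw [Ideal.span_le]
      rintro _ ⟨i, rfl⟩
      exact Ideal.mem_span_singleton.mpr (hm i)
    have := Ideal.mem_span_singleton.mp (hle (Submodule.IsPrincipal.generator_mem I))
    exact Int.natCast_dvd.mp this

namespace AddSubgroup

variable {G : Type*} [AddCommGroup G]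

theorem closure_singleton_sup_inf_ker_eq {H : AddSubgroup G} {φ : G →+ ℤ} {e : G} {d : ℤ}
    (he : e ∈ H) (hφe : φ e = d) (hdvd : ∀ b ∈ H, d ∣ φ b) :
    closure {e} ⊔ (H ⊓ φ.ker) = H := by
  refine le_antisymm (sup_le ((closure_le H).mpr (by simpa using he)) inf_le_left) fun b hb => ?_
  obtain ⟨k, hk⟩ := hdvd b hb
  have hrest : b - k • e ∈ H ⊓ φ.ker :=
    ⟨H.sub_mem hb (H.zsmul_mem he k), by simp [hφe, hk, mul_comm]⟩
  have hk : k • e ∈ closure {e} := zsmul_mem (subset_closure (Set.mem_singleton e)) k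
  simpa using add_mem_sup hk hrest

theorem closure_singleton_inf_ker_eq_bot {φ : G →+ ℤ} {e : G} (he : φ e ≠ 0) :
    closure {e} ⊓ φ.ker = ⊥ := by
  refine eq_bot_iff.mpr fun x ⟨hx, hker⟩ => ?_
  obtain ⟨k, rfl⟩ := mem_closure_singleton.mp hx
  have hk : k * φ e = 0 := by simpa using hker
  simp [(mul_eq_zero.mp hk).resolve_right he]

end AddSubgroup

section

variable {ι : Type*} {H : AddSubgroup (ι → ℤ)} {d : ℕ}

theorem le_natAbs_of_gcd_min
    (hmin : ∀ h ∈ H, h ≠ 0 → ∀ g : ℕ,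
      ((∀ n, (g : ℤ) ∣ h n) ∧ ∀ m : ℕ, (∀ n, (m : ℤ) ∣ h n) → m ∣ g) → d ≤ g)
    {h : ι → ℤ} (hH : h ∈ H) {i : ι} (hi : h i ≠ 0) : d ≤ (h i).natAbs := by
  obtain ⟨g, hg⟩ := Int.exists_gcd_of_family h
  have hdg : d ≤ g := hmin h hH (fun h0 => hi (by simp [h0])) g hg
  exact hdg.trans (Nat.le_of_dvd (Int.natAbs_pos.mpr hi) (Int.natCast_dvd.mp (hg.1 i)))

theorem natCast_dvd_apply_of_gcd_min [DecidableEq ι] (hd : 0 < d) {i₀ : ι}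
    (he : Pi.single i₀ (d : ℤ) ∈ H)
    (hmin : ∀ h ∈ H, h ≠ 0 → ∀ g : ℕ,
      ((∀ n, (g : ℤ) ∣ h n) ∧ ∀ m : ℕ, (∀ n, (m : ℤ) ∣ h n) → m ∣ g) → d ≤ g)
    {b : ι → ℤ} (hb : b ∈ H) : (d : ℤ) ∣ b i₀ := by
  have hd' : (d : ℤ) ≠ 0 := by exact_mod_cast hd.ne'
  set r := b - (b i₀ / d) • Pi.single i₀ (d : ℤ)
  have hr : r i₀ = b i₀ % d := by simp [r, Int.emod_def, mul_comm]
  have hrH : r ∈ H := H.sub_mem hb (H.zsmul_mem he _)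
  by_contra hndvd
  have hr0 : r i₀ ≠ 0 := by rwa [hr, Ne, ← Int.dvd_iff_emod_eq_zero]
  have hle := le_natAbs_of_gcd_min hmin hrH hr0
  have hlt : (r i₀).natAbs < d := by
    have hlt := Int.emod_lt_of_pos (b i₀) (by omega : (0 : ℤ) < d)
    have hnonneg := Int.emod_nonneg (b i₀) hd'
    omega
  omega

end

theorem stmt_7 (H : AddSubgroup (ℕ → ℤ)) (d : ℕ) (hd : 0 < d)
    (he : (Pi.single 0 (d : ℤ) : ℕ → ℤ) ∈ H)
    -- `d` is the minimum over the nonzero `h ∈ H` of the gcd of the components of `h` :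
    (hmin : ∀ h ∈ H, h ≠ (0 : ℕ → ℤ) → ∀ g : ℕ,
      ((∀ n, (g : ℤ) ∣ h n) ∧ ∀ m : ℕ, (∀ n, (m : ℤ) ∣ h n) → m ∣ g) → d ≤ g) :
    (∀ b ∈ H, (d : ℤ) ∣ b 0) ∧
      (AddSubgroup.closure {(Pi.single 0 (d : ℤ) : ℕ → ℤ)}) ⊔
          (H ⊓ (Pi.evalAddMonoidHom (fun _ : ℕ => ℤ) 0).ker) = H ∧
      (AddSubgroup.closure {(Pi.single 0 (d : ℤ) : ℕ → ℤ)}) ⊓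
          (H ⊓ (Pi.evalAddMonoidHom (fun _ : ℕ => ℤ) 0).ker) = ⊥ := by
  have hdvd : ∀ b ∈ H, (d : ℤ) ∣ b 0 := fun b hb => natCast_dvd_apply_of_gcd_min hd he hmin hb
  have he0 : Pi.evalAddMonoidHom (fun _ : ℕ => ℤ) 0 (Pi.single 0 (d : ℤ)) = d := by simp
  refine ⟨hdvd, AddSubgroup.closure_singleton_sup_inf_ker_eq he he0 hdvd, ?_⟩
  refine eq_bot_iff.mpr ((inf_le_inf_left _ inf_le_right).trans ?_)
  exact (AddSubgroup.closure_singleton_inf_ker_eq_bot (by rw [he0]; exact_mod_cast hd.ne')).le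
end

section
/- P = ∏_{n∈ℕ} ℤ does not have a direct summand isomorphic to S = ⊕_{n∈ℕ} ℤ. -/
/-!
By Specker's theorem a homomorphism `ℤ^ℕ → ℤ` vanishes on all but finitely many unit vectors
and is determined by its values on them, so `Hom(ℤ^ℕ, ℤ)` is countable. On the other hand
`Hom(⊕ ℤ, ℤ) ≅ ℤ^ℕ` is uncountable. A direct summand of `ℤ^ℕ` isomorphic to `⊕ ℤ` would give a
surjection `ℤ^ℕ → ⊕ ℤ`, and precomposition with it would embed `Hom(⊕ ℤ, ℤ)` into
`Hom(ℤ^ℕ, ℤ)`.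
-/

open Finset

theorem Int.eq_zero_of_forall_pow_dvd {b m : ℤ} (hb : b.natAbs ≠ 1) (h : ∀ k : ℕ, b ^ k ∣ m) :
    m = 0 := by
  by_contra hm
  obtain ⟨k, hk⟩ := Int.finiteMultiplicity_iff.mpr ⟨hb, hm⟩
  exact hk (h _)

namespace Specker

theorem dvd_map_of_forall_dvd {ι : Type*} (φ : (ι → ℤ) →+ ℤ) {d : ℤ} {z : ι → ℤ}
    (h : ∀ i, d ∣ z i) : d ∣ φ z := by
  choose w hw using h
  rw [show z = d • w from funext hw, map_zsmul, smul_eq_mul]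
  exact dvd_mul_right _ _

section

variable {ι : Type*} [DecidableEq ι]

theorem map_single_eq_mul (φ : (ι → ℤ) →+ ℤ) (i : ι) (a : ℤ) :
    φ (Pi.single i a) = a * φ (Pi.single i 1) := by
  rw [← smul_eq_mul, ← map_zsmul, ← Pi.single_smul', smul_eq_mul, mul_one]

theorem dvd_map_sub_sum (φ : (ι → ℤ) →+ ℤ) (x : ι → ℤ) (F : Finset ι) {d : ℤ}
    (h : ∀ i ∉ F, d ∣ x i) : d ∣ φ x - ∑ i ∈ F, x i * φ (Pi.single i 1) := by
  have hsplit : φ x - ∑ i ∈ F, x i * φ (Pi.single i 1) =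
      φ (x - ∑ i ∈ F, Pi.single i (x i)) := by
    rw [map_sub, map_sum]
    exact congrArg _ (sum_congr rfl fun i _ => (map_single_eq_mul φ i (x i)).symm)
  rw [hsplit]
  refine dvd_map_of_forall_dvd φ fun i => ?_
  by_cases hi : i ∈ F
  · simp [sum_pi_single, hi]
  · simpa [sum_pi_single, hi] using h i hi

end

theorem map_eq_zero_of_forall_pow_dvd (φ : (ℕ → ℤ) →+ ℤ) (hφ : ∀ n, φ (Pi.single n 1) = 0)
    {c : ℤ} (hc : c.natAbs ≠ 1) {y : ℕ → ℤ} (hy : ∀ n, c ^ n ∣ y n) : φ y = 0 :=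
  Int.eq_zero_of_forall_pow_dvd hc fun k => by
    simpa [hφ] using dvd_map_sub_sum φ y (range k) fun n hn =>
      (pow_dvd_pow c (by simpa using hn)).trans (hy n)

theorem eq_zero_of_map_single_eq_zero (φ : (ℕ → ℤ) →+ ℤ) (hφ : ∀ n, φ (Pi.single n 1) = 0) :
    φ = 0 := by
  refine AddMonoidHom.ext fun x => ?_
  have hsplit : ∀ n, ∃ a b : ℤ, x n = 2 ^ n * a + 3 ^ n * b := fun n => by
    obtain ⟨u, v, huv⟩ : IsCoprime ((2 : ℤ) ^ n) (3 ^ n) :=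
      (Int.isCoprime_iff_gcd_eq_one.mpr (by norm_num)).pow
    exact ⟨u * x n, v * x n, by linear_combination (x n) * huv.symm⟩
  choose a b hab using hsplit
  rw [show x = (fun n => 2 ^ n * a n) + fun n => 3 ^ n * b n from funext hab, map_add,
    map_eq_zero_of_forall_pow_dvd φ hφ (by norm_num) fun n => dvd_mul_right _ _,
    map_eq_zero_of_forall_pow_dvd φ hφ (by norm_num) fun n => dvd_mul_right _ _]
  rfl

theorem addMonoidHom_ext {φ ψ : (ℕ → ℤ) →+ ℤ}
    (h : ∀ n, φ (Pi.single n 1) = ψ (Pi.single n 1)) : φ = ψ :=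
  sub_eq_zero.mp <| eq_zero_of_map_single_eq_zero _ fun n => by simp [h n]

def modulus (c : ℕ → ℤ) (k : ℕ) : ℤ := ∏ j ∈ range k, 2 * (|c j| + 1)

theorem modulus_dvd_modulus (c : ℕ → ℤ) {k l : ℕ} (h : k ≤ l) : modulus c k ∣ modulus c l :=
  prod_dvd_prod_of_subset _ _ _ (range_subset_range.mpr h)

theorem modulus_succ (c : ℕ → ℤ) (k : ℕ) :
    modulus c (k + 1) = modulus c k * (2 * (|c k| + 1)) :=
  prod_range_succ _ _

theorem two_pow_le_modulus (c : ℕ → ℤ) (k : ℕ) : 2 ^ k ≤ modulus c k := by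
  induction k with
  | zero => simp [modulus]
  | succ k ih =>
    rw [modulus_succ, pow_succ]
    exact mul_le_mul ih (by linarith [abs_nonneg (c k)]) zero_le_two
      ((pow_pos two_pos k).le.trans ih)

theorem modulus_pos (c : ℕ → ℤ) (k : ℕ) : 0 < modulus c k :=
  (pow_pos two_pos k).trans_le (two_pow_le_modulus c k)

theorem two_mul_abs_sum_lt_modulus (c : ℕ → ℤ) (k : ℕ) :
    2 * |∑ j ∈ range k, modulus c j * c j| < modulus c k := by
  induction k with
  | zero => simp [modulus]
  | succ k ih =>
    rw [sum_range_succ, modulus_succ]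
    have hadd := abs_add_le (∑ j ∈ range k, modulus c j * c j) (modulus c k * c k)
    rw [abs_mul, abs_of_pos (modulus_pos c k)] at hadd
    nlinarith [modulus_pos c k]

/-- With `d = modulus c` and `s k = ∑ j < k, d j * c j`, we have `φ d ≡ s k [ZMOD d k]` and `2 * |s k| < d k`, so `φ d = s k` for all large `k`, and the
increments `s (k + 1) - s k = d k * c k` vanish. -/
theorem exists_map_single_eq_zero (φ : (ℕ → ℤ) →+ ℤ) :
    ∃ N, ∀ n ≥ N, φ (Pi.single n 1) = 0 := by
  set c : ℕ → ℤ := fun n => φ (Pi.single n 1)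
  set d := modulus c
  set s : ℕ → ℤ := fun k => ∑ j ∈ range k, d j * c j
  have hcong : ∀ k, d k ∣ φ d - s k := fun k =>
    dvd_map_sub_sum φ d (range k) fun n hn => modulus_dvd_modulus c (by simpa using hn)
  obtain ⟨N, hN⟩ : ∃ N, 2 * |φ d| < d N := by
    refine ⟨(2 * |φ d|).toNat, ?_⟩
    have : 2 ^ (2 * |φ d|).toNat ≤ d _ := two_pow_le_modulus c _
    have : (((2 * |φ d|).toNat : ℕ) : ℤ) < 2 ^ (2 * |φ d|).toNat := by
      exact_mod_cast Nat.lt_two_pow_self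
    have := Int.self_le_toNat (2 * |φ d|)
    omega
  have hs : ∀ k ≥ N, φ d = s k := fun k hk => by
    have hdk : d N ≤ d k := Int.le_of_dvd (modulus_pos c k) (modulus_dvd_modulus c hk)
    have hsk : 2 * |s k| < d k := two_mul_abs_sum_lt_modulus c k
    have habs := abs_sub (φ d) (s k)
    exact sub_eq_zero.mp (Int.eq_zero_of_abs_lt_dvd (hcong k) (by omega))
  refine ⟨N, fun n hn => ?_⟩
  have hinc : d n * c n = 0 := by
    have h := (hs n hn).symm.trans (hs (n + 1) (by omega))
    simpa [s, sum_range_succ] using h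
  exact (mul_eq_zero.mp hinc).resolve_left (modulus_pos c n).ne'

theorem countable_addMonoidHom : Countable ((ℕ → ℤ) →+ ℤ) := by
  have hfin (φ : (ℕ → ℤ) →+ ℤ) : (Function.support fun n => φ (Pi.single n 1)).Finite := by
    obtain ⟨N, hN⟩ := exists_map_single_eq_zero φ
    exact (Set.finite_Iio N).subset fun n hn => not_le.mp fun h => hn (hN n h)
  exact Function.Injective.countable (f := fun φ => Finsupp.ofSupportFinite _ (hfin φ))
    fun φ ψ h => addMonoidHom_ext fun n => DFunLike.congr_fun h n

end Specker

theorem AddSubgroup.exists_surjective_of_isCompl {G : Type*} [AddCommGroup G]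
    {A B : AddSubgroup G} (h : IsCompl A B) : ∃ f : G →+ A, Function.Surjective f :=
  ⟨(Submodule.projectionOnto _ _ (AddSubgroup.toIntSubmodule.isCompl h)).toAddMonoidHom,
    Submodule.projectionOnto_surjective _⟩

theorem AddMonoidHom.countable_of_surjective {G H M : Type*} [AddZero G] [AddZero H] [AddZero M]
    [Countable (G →+ M)] (f : G →+ H) (hf : Function.Surjective f) : Countable (H →+ M) :=
  Function.Injective.countable (f := fun g : H →+ M => g.comp f)
    fun _ _ h => (AddMonoidHom.cancel_right hf).mp h

theorem not_countable_addMonoidHom_finsupp : ¬ Countable ((ℕ →₀ ℤ) →+ ℤ) := by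
  intro h
  have : Uncountable (ℕ → ℤ) := by
    rw [← Cardinal.aleph0_lt_mk_iff, Cardinal.mk_arrow]
    simp [Cardinal.aleph0_power_aleph0, Cardinal.aleph0_lt_continuum]
  let e : (ℕ → ℤ) ≃ ((ℕ →₀ ℤ) →+ ℤ) :=
    (Equiv.piCongrRight fun _ => zmultiplesHom ℤ).trans Finsupp.liftAddHom.toEquiv
  exact Uncountable.not_countable e.injective.countable

theorem stmt_11 : ¬ ∃ A B : AddSubgroup (ℕ → ℤ),
    IsCompl A B ∧ Nonempty (A ≃+ (ℕ →₀ ℤ)) := by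
  rintro ⟨A, B, hAB, ⟨e⟩⟩
  obtain ⟨f, hf⟩ := AddSubgroup.exists_surjective_of_isCompl hAB
  have := Specker.countable_addMonoidHom
  exact not_countable_addMonoidHom_finsupp
    ((e.toAddMonoidHom.comp f).countable_of_surjective (e.surjective.comp hf))
end

section
/- Suppose H ⊆ S = ⊕_{n∈ℕ} ℤ is generated by elements (b_n)_{n∈ℕ} and has infinite rank. Then there exists x ∈ P = ∏_{n∈ℕ} ℤ and an infinite set K ⊆ ℕ such that the inner product ⟨b_k, x⟩ = Σ_i b_k(i)·x(i) is nonzero for all k ∈ K. -/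
open Cardinal

theorem stmt_13 (b : ℕ → (ℕ →₀ ℤ))
    (hrk : ℵ₀ ≤ Module.rank ℤ (AddSubgroup.closure (Set.range b))) :
    ∃ (x : ℕ → ℤ) (K : Set ℕ), K.Infinite ∧
      ∀ k ∈ K, (b k).sum (fun i c => c * x i) ≠ 0 := by
  classical
  -- Step 1: infinitely many b k are nonzero
  have hA : {k | b k ≠ 0}.Infinite := by
    by_contra hinf
    rw [Set.not_infinite] at hinf
    have hfin := hinf
    rw [← Submodule.span_int_eq_addSubgroupClosure] at hrk
    have h1 : Module.rank ℤ ↥(Submodule.span ℤ (Set.range b)) ≤ #(Set.range b) :=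
      rank_span_le _
    have h2 : (Set.range b).Finite := by
      have : Set.range b ⊆ insert 0 (b '' {k | b k ≠ 0}) := by
        rintro _ ⟨k, rfl⟩
        by_cases h : b k = 0
        · simp [h]
        · exact Set.mem_insert_iff.2 (Or.inr ⟨k, h, rfl⟩)
      exact ((hfin.image b).insert 0).subset this
    exact ((h1.trans_lt h2.lt_aleph0).not_ge hrk)
  by_cases hcoord : ∃ i, {k | (b k) i ≠ 0}.Infinite
  · -- Case 1: some coordinate i is nonzero for infinitely many k
    obtain ⟨i, hi⟩ := hcoord
    refine ⟨fun j => if j = i then 1 else 0, {k | (b k) i ≠ 0}, hi, fun k hk => ?_⟩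
    have : (b k).sum (fun j c => c * if j = i then 1 else 0) = (b k) i := by
      rw [Finsupp.sum]
      rw [Finset.sum_eq_single i]
      · simp
      · intro j _ hj; simp [hj]
      · intro h; simp [Finsupp.notMem_support_iff.1 h]
    rw [this]
    exact hk
  · -- Case 2: every coordinate is nonzero for only finitely many k
    push_neg at hcoord
    -- picking function: for every finite set F of coordinates, pick k with b k ≠ 0
    -- and support of b k disjoint from F
    have hpick : ∀ F : Finset ℕ, ∃ a, b a ≠ 0 ∧ ∀ i ∈ F, (b a) i = 0 := by
      intro F
      have hbad : (⋃ i ∈ F, {k | (b k) i ≠ 0}).Finite :=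
        Set.Finite.biUnion F.finite_toSet (fun i _ => hcoord i)
      obtain ⟨a, ha⟩ := (hA.diff hbad).nonempty
      refine ⟨a, ha.1, fun i hi => ?_⟩
      by_contra h
      exact ha.2 (Set.mem_biUnion hi h)
    choose pick hpick1 hpick2 using hpick
    -- recursive construction
    let g : ℕ → ℕ × Finset ℕ := fun n => Nat.rec
      (pick ∅, (b (pick ∅)).support)
      (fun _ p => (pick p.2, p.2 ∪ (b (pick p.2)).support)) n
    set seq : ℕ → ℕ := fun n => (g n).1 with hseq
    have hg0 : ∀ n, b (seq n) ≠ 0 := by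
      intro n; cases n with
      | zero => exact hpick1 ∅
      | succ m => exact hpick1 (g m).2
    have hsub : ∀ n, (b (seq n)).support ⊆ (g n).2 := by
      intro n; cases n with
      | zero => exact subset_rfl
      | succ m => exact Finset.subset_union_right
    have hmono : ∀ m n, m ≤ n → (g m).2 ⊆ (g n).2 := by
      intro m n h
      induction n with
      | zero => simp_all
      | succ p ih =>
        rcases Nat.lt_or_ge m (p+1) with h' | h'
        · exact (ih (Nat.lt_succ_iff.1 h')).trans Finset.subset_union_left
        · have : m = p + 1 := le_antisymm h h'
          subst this; exact subset_rfl
    have hzero : ∀ n i, i ∈ (g n).2 → (b (seq (n+1))) i = 0 := by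
      intro n i hi
      exact hpick2 (g n).2 i hi
    have hdisj : ∀ m n, m < n → ∀ i, (b (seq m)) i ≠ 0 → (b (seq n)) i = 0 := by
      intro m n hmn i hi
      obtain ⟨p, rfl⟩ := Nat.exists_eq_add_of_lt hmn
      -- n = m + p + 1
      have h1 : i ∈ (g m).2 := hsub m (Finsupp.mem_support_iff.2 hi)
      have h2 : i ∈ (g (m + p)).2 := hmono m (m+p) (Nat.le_add_right _ _) h1
      exact hzero (m+p) i h2
    -- define x
    set x : ℕ → ℤ := fun i =>
      if h : ∃ n, (b (seq n)) i ≠ 0 then (b (seq (Nat.find h))) i else 0 with hx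
    have hxval : ∀ n i, (b (seq n)) i ≠ 0 → x i = (b (seq n)) i := by
      intro n i hi
      have hex : ∃ m, (b (seq m)) i ≠ 0 := ⟨n, hi⟩
      rw [hx]
      simp only [dif_pos hex]
      have hfind : (b (seq (Nat.find hex))) i ≠ 0 := Nat.find_spec hex
      rcases lt_trichotomy (Nat.find hex) n with h | h | h
      · exact absurd (hdisj _ _ h i hfind) hi
      · rw [h]
      · exact absurd (hdisj _ _ h i hi) hfind
    -- seq injective
    have hinj : Function.Injective seq := by
      intro m n hmn
      by_contra hne
      obtain ⟨i, hi⟩ := Finsupp.ne_iff.1 (hg0 m)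
      simp only [Finsupp.coe_zero, Pi.zero_apply] at hi
      rcases Ne.lt_or_gt hne with h | h
      · have := hdisj m n h i hi
        rw [← hmn] at this
        exact hi this
      · have hi' : (b (seq n)) i ≠ 0 := by rw [← hmn]; exact hi
        have := hdisj n m h i hi'
        exact hi this
    refine ⟨x, Set.range seq, Set.infinite_range_of_injective hinj, ?_⟩
    rintro _ ⟨n, rfl⟩
    have hsum : (b (seq n)).sum (fun i c => c * x i) =
        (b (seq n)).sum (fun i c => c * c) := by
      apply Finsupp.sum_congr
      intro i hi
      rw [hxval n i (Finsupp.mem_support_iff.1 hi)]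
    rw [hsum]
    have hpos : 0 < (b (seq n)).sum (fun i c => c * c) := by
      rw [Finsupp.sum]
      apply Finset.sum_pos
      · intro i hi
        exact mul_self_pos.2 (Finsupp.mem_support_iff.1 hi)
      · exact Finsupp.support_nonempty_iff.2 (hg0 n)
    exact hpos.ne'
end

section
/- Let G be a pure subgroup of P = ∏_{n∈ℕ} ℤ containing S = ⊕_{n∈ℕ} ℤ and closed under componentwise multiplication by the sequence d = (d_n), where d_n is divisible by p_k for all k ≤ n and d_n ≡ −1 mod q_k for all k ≤ n, with (p_n), (q_n) disjoint increasing sequences of primes. Then any homomorphism f : G → ℤ with f(e_n) = 0 for all n is identically zero. -/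
/-!
If `f` kills every `e n`, it kills the finitely supported sequences. Purity then gives
`m ∣ f x` whenever all but finitely many coordinates of `x` are divisible by `m`: subtract the
finitely many offending coordinates and divide by `m` inside `G`. For `y = d * x` this applies
with `m = p k` for every `k`, and for `x + y = (d + 1) * x` with `m = q k`; an integer divisible
by arbitrarily large numbers is `0`, so `f y = 0 = f (x + y)` and hence `f x = 0`.
-/

open Filter Function

theorem Int.eq_zero_of_forall_dvd_of_strictMono {r : ℕ → ℕ} (hr : StrictMono r) {N : ℤ}
    (hN : ∀ k, (r k : ℤ) ∣ N) : N = 0 :=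
  Int.eq_zero_of_dvd_of_natAbs_lt_natAbs (hN (N.natAbs + 1)) <|
    Nat.lt_of_lt_of_le N.natAbs.lt_succ_self hr.le_apply

section PureSubgroup

variable {ι : Type*} {G : AddSubgroup (ι → ℤ)} (f : G →+ ℤ)

theorem AddMonoidHom.apply_eq_zero_of_support_finite [DecidableEq ι] (e : ι → G)
    (he : ∀ i, (e i : ι → ℤ) = Pi.single i 1) (hf : ∀ i, f (e i) = 0) (x : G)
    (hx : (support (x : ι → ℤ)).Finite) : f x = 0 := by
  have hsum : x = ∑ i ∈ hx.toFinset, (x : ι → ℤ) i • e i := by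
    ext j
    simp [Finset.sum_apply, he, Pi.single_apply]
  rw [hsum, map_sum]
  simp [hf]

theorem AddMonoidHom.dvd_apply_of_eventually_dvd
    (hS : ∀ x : ι → ℤ, (support x).Finite → x ∈ G)
    (hpure : ∀ x ∈ G, ∀ m : ℤ, (∃ y : ι → ℤ, x = m • y) → ∃ y ∈ G, x = m • y)
    (hf : ∀ x : G, (support (x : ι → ℤ)).Finite → f x = 0)
    (x : G) (m : ℤ) (hm : ∀ᶠ i in cofinite, m ∣ (x : ι → ℤ) i) : m ∣ f x := by
  classical
  let s : ι → ℤ := fun i => if m ∣ (x : ι → ℤ) i then 0 else (x : ι → ℤ) i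
  have hs : (support s).Finite := hm.subset fun i hi => by
    by_contra h
    exact hi (if_pos (not_not.mp h))
  have hdvd : ∀ i, m ∣ ((x : ι → ℤ) - s) i := fun i => by
    by_cases h : m ∣ (x : ι → ℤ) i <;> simp [s, h]
  obtain ⟨y, hyG, hy⟩ := hpure _ (sub_mem x.2 (hS s hs)) m
    ⟨fun i => ((x : ι → ℤ) - s) i / m, funext fun i => (Int.mul_ediv_cancel' (hdvd i)).symm⟩
  have hx : x = ⟨s, hS s hs⟩ + m • ⟨y, hyG⟩ := by
    ext i
    simp [← hy]
  rw [hx, map_add, hf _ hs, map_zsmul, zero_add, smul_eq_mul]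
  exact dvd_mul_right m _

end PureSubgroup

theorem stmt_15_general (G : AddSubgroup (ℕ → ℤ))
    (p q : ℕ → ℕ)
    (hpm : StrictMono p) (hqm : StrictMono q)
    (d : ℕ → ℤ) (hd1 : ∀ n, ∀ k ≤ n, (p k : ℤ) ∣ d n)
    (hd2 : ∀ n, ∀ k ≤ n, d n ≡ -1 [ZMOD (q k)])
    -- `G` contains `S`, the finitely supported sequences :
    (hS : ∀ x : ℕ → ℤ, (Function.support x).Finite → x ∈ G)
    -- `G` is pure in `P` :
    (hpure : ∀ x ∈ G, ∀ m : ℤ, (∃ y : ℕ → ℤ, x = m • y) → ∃ y ∈ G, x = m • y)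
    -- `G` is closed under componentwise multiplication by `d` :
    (hclosed : ∀ x ∈ G, (fun n => d n * x n) ∈ G)
    (e : ℕ → G) (he : ∀ n, (e n : ℕ → ℤ) = Pi.single n 1)
    (f : G →+ ℤ) (hf : ∀ n, f (e n) = 0) :
    f = 0 := by
  ext x
  have hfin := f.apply_eq_zero_of_support_finite e he hf
  let y : G := ⟨fun n => d n * (x : ℕ → ℤ) n, hclosed x x.2⟩
  have hy : f y = 0 := Int.eq_zero_of_forall_dvd_of_strictMono hpm fun k =>
    f.dvd_apply_of_eventually_dvd hS hpure hfin y _ <| by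
      rw [Nat.cofinite_eq_atTop]
      filter_upwards [eventually_ge_atTop k] with n hn using (hd1 n k hn).mul_right _
  have hxy : f (x + y) = 0 := Int.eq_zero_of_forall_dvd_of_strictMono hqm fun k =>
    f.dvd_apply_of_eventually_dvd hS hpure hfin (x + y) _ <| by
      rw [Nat.cofinite_eq_atTop]
      filter_upwards [eventually_ge_atTop k] with n hn
      have hdq : (q k : ℤ) ∣ d n + 1 := by
        simpa using (hd2 n k hn).symm.dvd
      simpa [y, add_mul, add_comm] using hdq.mul_right ((x : ℕ → ℤ) n)
  simpa [hy] using hxy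

theorem stmt_15 (G : AddSubgroup (ℕ → ℤ))
    (p q : ℕ → ℕ) (hp : ∀ n, (p n).Prime) (hq : ∀ n, (q n).Prime)
    (hpm : StrictMono p) (hqm : StrictMono q)
    (hdisj : Disjoint (Set.range p) (Set.range q))
    (d : ℕ → ℤ) (hd1 : ∀ n, ∀ k ≤ n, (p k : ℤ) ∣ d n)
    (hd2 : ∀ n, ∀ k ≤ n, d n ≡ -1 [ZMOD (q k)])
    -- `G` contains `S`, the finitely supported sequences :
    (hS : ∀ x : ℕ → ℤ, (Function.support x).Finite → x ∈ G)
    -- `G` is pure in `P` :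
    (hpure : ∀ x ∈ G, ∀ m : ℤ, (∃ y : ℕ → ℤ, x = m • y) → ∃ y ∈ G, x = m • y)
    -- `G` is closed under componentwise multiplication by `d` :
    (hclosed : ∀ x ∈ G, (fun n => d n * x n) ∈ G)
    (e : ℕ → G) (he : ∀ n, (e n : ℕ → ℤ) = Pi.single n 1)
    (f : G →+ ℤ) (hf : ∀ n, f (e n) = 0) :
    f = 0 :=
  stmt_15_general G p q hpm hqm d hd1 hd2 hS hpure hclosed e he f hf
end

section
/- Let G be as in Eda's lemma (pure subgroup of P containing S, closed under multiplication by d) and suppose additionally that every homomorphism G → ℤ annihilates all but finitely many of the unit vectors e_n. Then every homomorphism f : G → ℤ has the form f(x) = Σ_{i<n} f(e_i)·x(i) for some n, and in particular extends to a homomorphism P → ℤ. -/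
/-!
Let `g = f - F`, where `F x = ∑_{i<N} f(eᵢ) xᵢ` and `N` bounds the support of `n ↦ f(eₙ)`; then
`g` vanishes on every `eₙ`, and it remains to show `g = 0`. If `y ∈ G` and the primes `r₀, …, rₘ₋₁`
divide every `yⱼ` with `j ≥ m`, then `y` minus its first `m` coordinates is divisible by
`r₀ ⋯ rₘ₋₁` in `P`, hence in `G` by purity, so `r₀ ⋯ rₘ₋₁ ∣ g y` for every `m` and `g y = 0`.
The primes `p` play this role for `d • x` and the primes `q` for `(d + 1) • x`, so
`g x = g ((d + 1) • x) - g (d • x) = 0`.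
-/

theorem Int.prod_range_dvd_of_prime_dvd {r : ℕ → ℕ} (hr : ∀ k, (r k).Prime)
    (hinj : Function.Injective r) {m : ℕ} {a : ℤ} (ha : ∀ k < m, (r k : ℤ) ∣ a) :
    ∏ k ∈ Finset.range m, (r k : ℤ) ∣ a :=
  Finset.prod_dvd_of_coprime
    (fun i _ j _ hij => Nat.isCoprime_iff_coprime.mpr
      ((Nat.coprime_primes (hr i) (hr j)).mpr (hinj.ne hij)))
    (fun k hk => ha k (Finset.mem_range.mp hk))

theorem Int.eq_zero_of_forall_prod_range_dvd {r : ℕ → ℕ} (hr : ∀ k, 2 ≤ r k) {z : ℤ}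
    (hz : ∀ m, ∏ k ∈ Finset.range m, (r k : ℤ) ∣ z) : z = 0 := by
  refine Int.eq_zero_of_dvd_of_natAbs_lt_natAbs (hz z.natAbs) ?_
  calc z.natAbs < 2 ^ z.natAbs := Nat.lt_two_pow_self
    _ = ∏ _k ∈ Finset.range z.natAbs, 2 := by simp
    _ ≤ ∏ k ∈ Finset.range z.natAbs, r k := Finset.prod_le_prod' fun k _ => hr k
    _ = (∏ k ∈ Finset.range z.natAbs, (r k : ℤ)).natAbs := by
      rw [← Nat.cast_prod, Int.natAbs_natCast]

section PureSubgroup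

variable {G : AddSubgroup (ℕ → ℤ)}
  (hpure : ∀ x ∈ G, ∀ m : ℤ, (∃ y : ℕ → ℤ, x = m • y) → ∃ y ∈ G, x = m • y)
  {e : ℕ → G} (he : ∀ n, (e n : ℕ → ℤ) = Pi.single n 1)
  {g : G →+ ℤ} (hg : ∀ n, g (e n) = 0)

include he in
theorem coe_sum_range_smul_unit (y : ℕ → ℤ) (m j : ℕ) :
    ((∑ i ∈ Finset.range m, y i • e i : G) : ℕ → ℤ) j = if j < m then y j else 0 := by
  simp only [AddSubgroup.val_finsetSum, AddSubgroup.coe_zsmul, he, Finset.sum_apply,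
    Pi.smul_apply, Pi.single_apply, smul_eq_mul, mul_ite, mul_one, mul_zero,
    Finset.sum_ite_eq, Finset.mem_range]

include hpure he hg in
theorem dvd_apply_of_dvd_tail (y : G) {R : ℤ} {m : ℕ}
    (hy : ∀ j, m ≤ j → R ∣ (y : ℕ → ℤ) j) : R ∣ g y := by
  set T : G := ∑ i ∈ Finset.range m, (y : ℕ → ℤ) i • e i
  have hgT : g T = 0 := by simp [T, map_sum, hg]
  have hdvd : ∀ j, R ∣ (y : ℕ → ℤ) j - (T : ℕ → ℤ) j := fun j => by
    rw [coe_sum_range_smul_unit he]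
    split_ifs with hj
    · simp
    · simpa using hy j (not_lt.mp hj)
  obtain ⟨w, hwG, hw⟩ := hpure _ (G.sub_mem y.2 T.2) R
    ⟨fun j => ((y : ℕ → ℤ) j - (T : ℕ → ℤ) j) / R,
      funext fun j => (Int.mul_ediv_cancel' (hdvd j)).symm⟩
  have hyT : y = T + R • ⟨w, hwG⟩ := Subtype.ext (by simp [← hw])
  exact ⟨g ⟨w, hwG⟩, by rw [hyT, map_add, hgT, map_zsmul, zero_add, smul_eq_mul]⟩

include hpure he hg in
theorem eq_zero_of_prime_dvd_tail {r : ℕ → ℕ} (hr : ∀ k, (r k).Prime)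
    (hinj : Function.Injective r) (y : G) (hy : ∀ k j, k ≤ j → (r k : ℤ) ∣ (y : ℕ → ℤ) j) :
    g y = 0 :=
  Int.eq_zero_of_forall_prod_range_dvd (fun k => (hr k).two_le) fun m =>
    dvd_apply_of_dvd_tail hpure he hg y (m := m) fun j hj =>
      Int.prod_range_dvd_of_prime_dvd hr hinj fun k hk => hy k j (by omega)

include hpure he hg in
theorem eq_zero_of_apply_unit_eq_zero {d : ℕ → ℤ}
    (hclosed : ∀ x ∈ G, (fun n => d n * x n) ∈ G)
    {p q : ℕ → ℕ} (hp : ∀ n, (p n).Prime) (hq : ∀ n, (q n).Prime)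
    (hpi : Function.Injective p) (hqi : Function.Injective q)
    (hd1 : ∀ n, ∀ k ≤ n, (p k : ℤ) ∣ d n) (hd2 : ∀ n, ∀ k ≤ n, d n ≡ -1 [ZMOD (q k)])
    (x : G) : g x = 0 := by
  set dx : G := ⟨fun n => d n * (x : ℕ → ℤ) n, hclosed _ x.2⟩
  have hdx : g dx = 0 := eq_zero_of_prime_dvd_tail hpure he hg hp hpi dx
    fun k j hkj => (hd1 j k hkj).mul_right _
  have hdx_add : g (dx + x) = 0 := eq_zero_of_prime_dvd_tail hpure he hg hq hqi (dx + x)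
    fun k j hkj => by
      have hcoe : ((dx + x : G) : ℕ → ℤ) j = (d j + 1) * (x : ℕ → ℤ) j := by
        simp only [dx, AddSubgroup.coe_add, Pi.add_apply]
        ring
      rw [hcoe]
      exact (by simpa using (hd2 j k hkj).symm.dvd : (q k : ℤ) ∣ d j + 1).mul_right _
  rwa [map_add, hdx, zero_add] at hdx_add

end PureSubgroup

theorem stmt_16_general (G : AddSubgroup (ℕ → ℤ))
    (p q : ℕ → ℕ) (hp : ∀ n, (p n).Prime) (hq : ∀ n, (q n).Prime)
    (hpm : StrictMono p) (hqm : StrictMono q)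
    (d : ℕ → ℤ) (hd1 : ∀ n, ∀ k ≤ n, (p k : ℤ) ∣ d n)
    (hd2 : ∀ n, ∀ k ≤ n, d n ≡ -1 [ZMOD (q k)])
    -- `G` is pure in `P` :
    (hpure : ∀ x ∈ G, ∀ m : ℤ, (∃ y : ℕ → ℤ, x = m • y) → ∃ y ∈ G, x = m • y)
    -- `G` is closed under componentwise multiplication by `d` :
    (hclosed : ∀ x ∈ G, (fun n => d n * x n) ∈ G)
    (e : ℕ → G) (he : ∀ n, (e n : ℕ → ℤ) = Pi.single n 1)
    -- every homomorphism `G → ℤ` annihilates all but finitely many `e n` :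
    (hSpecker : ∀ g : G →+ ℤ, {n : ℕ | g (e n) ≠ 0}.Finite)
    (f : G →+ ℤ) :
    (∃ n : ℕ, ∀ x : G, f x = ∑ i ∈ Finset.range n, f (e i) * (x : ℕ → ℤ) i) ∧
      ∃ F : (ℕ → ℤ) →+ ℤ, ∀ x : G, F (x : ℕ → ℤ) = f x := by
  obtain ⟨B, hB⟩ := (hSpecker f).bddAbove
  have hN : ∀ i, B + 1 ≤ i → f (e i) = 0 := fun i hi => by
    by_contra hne
    exact absurd (hB hne) (by omega)
  let F : (ℕ → ℤ) →+ ℤ :=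
    ∑ i ∈ Finset.range (B + 1), f (e i) • Pi.evalAddMonoidHom (fun _ => ℤ) i
  have hF : ∀ x, F x = ∑ i ∈ Finset.range (B + 1), f (e i) * x i := by simp [F]
  have hfF : ∀ x : G, f x = F x := fun x => sub_eq_zero.mp <|
    eq_zero_of_apply_unit_eq_zero (g := f - F.comp G.subtype) hpure he
      (fun n => by
        by_cases hn : n < B + 1
        · simp [hF, he, Pi.single_apply, hn]
        · simp [hF, he, Pi.single_apply, hn, hN n (by omega)])
      hclosed hp hq hpm.injective hqm.injective hd1 hd2 x
  exact ⟨⟨B + 1, fun x => (hfF x).trans (hF x)⟩, F, fun x => (hfF x).symm⟩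

theorem stmt_16 (G : AddSubgroup (ℕ → ℤ))
    (p q : ℕ → ℕ) (hp : ∀ n, (p n).Prime) (hq : ∀ n, (q n).Prime)
    (hpm : StrictMono p) (hqm : StrictMono q)
    (hdisj : Disjoint (Set.range p) (Set.range q))
    (d : ℕ → ℤ) (hd1 : ∀ n, ∀ k ≤ n, (p k : ℤ) ∣ d n)
    (hd2 : ∀ n, ∀ k ≤ n, d n ≡ -1 [ZMOD (q k)])
    -- `G` contains `S`, the finitely supported sequences :
    (hS : ∀ x : ℕ → ℤ, (Function.support x).Finite → x ∈ G)
    -- `G` is pure in `P` :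
    (hpure : ∀ x ∈ G, ∀ m : ℤ, (∃ y : ℕ → ℤ, x = m • y) → ∃ y ∈ G, x = m • y)
    -- `G` is closed under componentwise multiplication by `d` :
    (hclosed : ∀ x ∈ G, (fun n => d n * x n) ∈ G)
    (e : ℕ → G) (he : ∀ n, (e n : ℕ → ℤ) = Pi.single n 1)
    -- every homomorphism `G → ℤ` annihilates all but finitely many `e n` :
    (hSpecker : ∀ g : G →+ ℤ, {n : ℕ | g (e n) ≠ 0}.Finite)
    (f : G →+ ℤ) :
    (∃ n : ℕ, ∀ x : G, f x = ∑ i ∈ Finset.range n, f (e i) * (x : ℕ → ℤ) i) ∧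
      ∃ F : (ℕ → ℤ) →+ ℤ, ∀ x : G, F (x : ℕ → ℤ) = f x :=
  stmt_16_general G p q hp hq hpm hqm d hd1 hd2 hpure hclosed e he hSpecker f
end

section
/- Let G ⊆ ∏_{n∈ℕ} ℤ be a subgroup. For x ∈ G define Z_x = {c ∈ S \ {0} : ⟨c, x⟩ = 0}, where S = ⊕_{n∈ℕ} ℤ and ⟨c,x⟩ = Σ_i c(i)x(i). Then the family {Z_x : x ∈ G} has the strong finite intersection property: every finite subfamily has infinite intersection. -/
/-! The coordinate vectors `(x k)_{x ∈ t}`, `k ∈ ℕ`, are infinitely many elements of the finite-rank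
module `t → ℤ`, hence linearly dependent; a dependence relation is a nonzero `c ∈ ℕ →₀ ℤ` orthogonal
to every `x ∈ t`, and so are all its nonzero multiples. -/

variable {R M α : Type*} [CommRing R]

noncomputable def finsuppOrthogonal (X : Set (α → R)) : Submodule R (α →₀ R) :=
  ⨅ x ∈ X, LinearMap.ker (Finsupp.linearCombination R x)

theorem mem_finsuppOrthogonal {X : Set (α → R)} {c : α →₀ R} :
    c ∈ finsuppOrthogonal X ↔ ∀ x ∈ X, c.sum (fun a ca => ca * x a) = 0 := by
  simp [finsuppOrthogonal, Finsupp.linearCombination_apply]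

theorem finsuppOrthogonal_ne_bot [Nontrivial R] [Infinite α] (X : Set (α → R)) [Finite X] :
    finsuppOrthogonal X ≠ ⊥ := by
  let v : α → X → R := fun a x => (x : α → R) a
  obtain ⟨c, hc, hc0⟩ : ∃ c : α →₀ R, Finsupp.linearCombination R v c = 0 ∧ c ≠ 0 := by
    simpa [linearIndependent_iff] using Module.Finite.not_linearIndependent_of_infinite (R := R) v
  refine (Submodule.ne_bot_iff _).2 ⟨c, mem_finsuppOrthogonal.2 fun x hx => ?_, hc0⟩
  have := congrFun hc ⟨x, hx⟩
  simpa [v, Finsupp.linearCombination_apply, Finsupp.sum, Finset.sum_apply] using this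

theorem Submodule.infinite_diff_zero [IsDomain R] [Infinite R] [AddCommGroup M] [Module R M]
    [Module.IsTorsionFree R M] {K : Submodule R M} (hK : K ≠ ⊥) :
    ((K : Set M) \ {0}).Infinite := by
  obtain ⟨c, hcK, hc0⟩ := (Submodule.ne_bot_iff K).1 hK
  have hrange := (infinite_range_add_smul_iff (R := R) (0 : M) c).2 hc0
  refine (hrange.mono ?_).sdiff (Set.finite_singleton 0)
  rintro _ ⟨r, rfl⟩
  simpa using K.smul_mem r hcK

theorem stmt_17_general (t : Finset (ℕ → ℤ)) :
    {c : ℕ →₀ ℤ | c ≠ 0 ∧ ∀ x ∈ t, c.sum (fun i ci => ci * x i) = 0}.Infinite := by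
  have hset : {c : ℕ →₀ ℤ | c ≠ 0 ∧ ∀ x ∈ t, c.sum (fun i ci => ci * x i) = 0} =
      (finsuppOrthogonal (t : Set (ℕ → ℤ)) : Set (ℕ →₀ ℤ)) \ {0} := by
    ext c
    simp [mem_finsuppOrthogonal, and_comm]
  rw [hset]
  exact Submodule.infinite_diff_zero (finsuppOrthogonal_ne_bot _)

theorem stmt_17 (G : AddSubgroup (ℕ → ℤ)) (t : Finset (ℕ → ℤ))
    (ht : ↑t ⊆ (G : Set (ℕ → ℤ))) :
    {c : ℕ →₀ ℤ | c ≠ 0 ∧ ∀ x ∈ t, c.sum (fun i ci => ci * x i) = 0}.Infinite :=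
  stmt_17_general t
end

section
/- If S ⊆ G ⊆ P = ∏_{n∈ℕ} ℤ and the cardinality of G is less than the pseudo-intersection number 𝔭, then G is not weakly S-binding: there exists an endomorphism f of P mapping G into S = ⊕_{n∈ℕ} ℤ such that f(S) has infinite rank. -/
open Cardinal

/-- `S = ⊕_{n∈ℕ} ℤ`, the finitely supported sequences, as a subgroup of the
Baer–Specker group `P = ∏_{n∈ℕ} ℤ`. -/
def SpeckerS : AddSubgroup (ℕ → ℤ) where
  carrier := {x | (Function.support x).Finite}
  zero_mem' := by simp
  add_mem' {a b} ha hb := (ha.union hb).subset (Function.support_add a b)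
  neg_mem' {a} ha := by simpa using ha

/-- A family of sets has the strong finite intersection property if every
finite subfamily has infinite intersection. -/
def SFIP (F : Set (Set ℕ)) : Prop :=
  ∀ t : Finset (Set ℕ), ↑t ⊆ F → (⋂ s ∈ t, s).Infinite

/-- `A` is a pseudo-intersection of the family `F`. -/
def IsPseudoIntersection (A : Set ℕ) (F : Set (Set ℕ)) : Prop :=
  A.Infinite ∧ ∀ s ∈ F, (A \ s).Finite

/-- The pseudo-intersection number `𝔭`: the least cardinality of a family of
subsets of `ℕ` with the strong finite intersection property but with no
infinite pseudo-intersection. -/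
noncomputable def pNumber : Cardinal :=
  sInf {c : Cardinal | ∃ F : Set (Set ℕ), #F = c ∧ SFIP F ∧
    ¬ ∃ A : Set ℕ, IsPseudoIntersection A F}

/-!
A code `a : ℕ →₀ ℤ` stands for the functional `x ↦ ∑ j, a j * x j` on `ℕ → ℤ`. The sets of codes
annihilating a given `x ∈ G`, together with the sets of nonzero codes supported in `[m, ∞)`, form
a family of fewer than `𝔭` sets with the strong finite intersection property: `k + 1` windows of
`k` sequences are linearly dependent over `ℤ`. A pseudo-intersection `A` of this family contains
codes `a₀, a₁, …` with pairwise disjoint supports, and `f x = (aᵢ · x)ᵢ` is the required map: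
for `x ∈ G` only the finitely many codes in `A` not annihilating `x` contribute, while `f` sends
suitable unit vectors to nonzero multiples of distinct unit vectors.
-/

open Function

theorem exists_pseudoIntersection_of_mk_lt_pNumber {C : Type} [Countable C] [Infinite C]
    {F : Set (Set C)} (hF : #F < pNumber)
    (hfip : ∀ t : Finset (Set C), ↑t ⊆ F → (⋂ s ∈ t, s).Infinite) :
    ∃ A : Set C, A.Infinite ∧ ∀ s ∈ F, (A \ s).Finite := by
  classical
  obtain ⟨_⟩ := nonempty_denumerable C
  set e := Denumerable.eqv C
  set F' : Set (Set ℕ) := (e.symm ⁻¹' ·) '' F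
  have hsfip : SFIP F' := by
    intro t ht
    have hpull : ↑(t.image (e ⁻¹' ·)) ⊆ F := by
      intro s hs
      obtain ⟨s', hs', rfl⟩ := Finset.mem_image.1 hs
      obtain ⟨s, hs, rfl⟩ := ht hs'
      show e ⁻¹' (e.symm ⁻¹' s) ∈ F
      rwa [e.preimage_symm_preimage]
    have hinf := hfip _ hpull
    rw [Finset.set_biInter_finset_image, ← Set.preimage_iInter₂] at hinf
    exact fun hfin => hinf (hfin.preimage e.injective.injOn)
  obtain ⟨A, hA, hAF⟩ : ∃ A : Set ℕ, IsPseudoIntersection A F' := by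
    by_contra h
    have hp : pNumber ≤ #F' := csInf_le' ⟨F', rfl, hsfip, h⟩
    exact hp.not_gt (mk_image_le.trans_lt hF)
  refine ⟨e ⁻¹' A, hA.preimage (by simp), fun s hs => ?_⟩
  have hfin := (hAF _ ⟨s, hs, rfl⟩).preimage e.injective.injOn
  rwa [Set.preimage_sdiff, e.preimage_symm_preimage] at hfin

def annihilators (x : ℕ → ℤ) : Set (ℕ →₀ ℤ) :=
  {a | Finsupp.linearCombination ℤ x a = 0}

def tailCodes (m : ℕ) : Set (ℕ →₀ ℤ) :=
  (Finsupp.supported ℤ ℤ (Set.Ici m) : Set (ℕ →₀ ℤ)) \ {0}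

theorem tailCodes_antitone : Antitone tailCodes := fun _ _ hmn _ ⟨ha, ha0⟩ =>
  ⟨Finsupp.supported_mono (Set.Ici_subset_Ici.2 hmn) ha, ha0⟩

theorem exists_tailCodes_disjoint (s : Finset (ℕ →₀ ℤ)) :
    ∃ m, ∀ a ∈ s, ∀ b ∈ tailCodes m, Disjoint a.support b.support := by
  refine ⟨s.sup fun a => a.support.sup id + 1, fun a ha b hb => Finset.disjoint_left.2 ?_⟩
  intro j hja hjb
  have hle : a.support.sup id + 1 ≤ s.sup fun a => a.support.sup id + 1 :=
    Finset.le_sup (f := fun a : ℕ →₀ ℤ => a.support.sup id + 1) ha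
  have hjm : s.sup (fun a => a.support.sup id + 1) ≤ j := (Finsupp.mem_supported _ _).1 hb.1 hjb
  have hja' : j ≤ a.support.sup id := Finset.le_sup (f := id) hja
  omega

theorem infinite_of_forall_inter_tailCodes_nonempty {s : Set (ℕ →₀ ℤ)}
    (h : ∀ m, (s ∩ tailCodes m).Nonempty) : s.Infinite := by
  intro hs
  obtain ⟨m, hm⟩ := exists_tailCodes_disjoint hs.toFinset
  obtain ⟨b, hbs, hb⟩ := h m
  have hdisj := hm b (hs.mem_toFinset.2 hbs) b hb
  exact hb.2 (Finsupp.support_eq_empty.1 (disjoint_self.1 hdisj))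

theorem exists_mem_tailCodes_forall_mem_annihilators (X : Finset (ℕ → ℤ)) (N : ℕ) :
    ∃ a ∈ tailCodes N, ∀ x ∈ X, a ∈ annihilators x := by
  classical
  set w : Fin (X.card + 1) → (X → ℤ) := fun j x => x.1 (N + j)
  have hdep : ¬ LinearIndependent ℤ w := fun h => by
    simpa [Module.finrank_fintype_fun_eq_card] using h.fintype_card_le_finrank
  obtain ⟨g, hg, j₀, hj₀⟩ := Fintype.not_linearIndependent_iff.1 hdep
  refine ⟨∑ j : Fin (X.card + 1), Finsupp.single (N + j) (g j), ⟨?_, ?_⟩, fun x hx => ?_⟩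
  · refine (Finsupp.mem_supported _ _).2 fun i hi => ?_
    obtain ⟨j, -, hj⟩ := Finset.mem_biUnion.1 (Finsupp.support_finsetSum hi)
    rw [Finset.mem_singleton.1 (Finsupp.support_single_subset hj)]
    exact Nat.le_add_right N j
  · intro h0
    refine hj₀ ?_
    simpa [Finsupp.finsetSum_apply, Finsupp.single_apply, Fin.val_inj] using
      DFunLike.congr_fun h0 (N + j₀)
  · have := congrFun hg ⟨x, hx⟩
    simpa [annihilators, map_sum, w, Finset.sum_apply] using this

def codeFamily (X : Set (ℕ → ℤ)) : Set (Set (ℕ →₀ ℤ)) :=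
  annihilators '' X ∪ Set.range tailCodes

theorem mk_codeFamily_le (X : Set (ℕ → ℤ)) : #(codeFamily X) ≤ #X + ℵ₀ :=
  (mk_union_le _ _).trans <| add_le_add mk_image_le (mk_range_le.trans_eq mk_nat)

theorem exists_subset_biInter_of_subset_codeFamily {X : Set (ℕ → ℤ)}
    (t : Finset (Set (ℕ →₀ ℤ))) (ht : ↑t ⊆ codeFamily X) :
    ∃ (Y : Finset (ℕ → ℤ)) (N : ℕ), tailCodes N ∩ ⋂ x ∈ Y, annihilators x ⊆ ⋂ s ∈ t, s := by
  classical
  induction t using Finset.induction_on with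
  | empty => exact ⟨∅, 0, by simp⟩
  | insert s t _ ih =>
    rw [Finset.coe_insert, Set.insert_subset_iff] at ht
    obtain ⟨Y, N, hYN⟩ := ih ht.2
    rw [Finset.set_biInter_insert]
    rcases ht.1 with ⟨x, -, rfl⟩ | ⟨m, rfl⟩
    · refine ⟨insert x Y, N, fun a ⟨haN, haY⟩ => ?_⟩
      rw [Finset.set_biInter_insert] at haY
      exact ⟨haY.1, hYN ⟨haN, haY.2⟩⟩
    · refine ⟨Y, max N m, fun a ⟨haN, haY⟩ => ⟨?_, hYN ⟨?_, haY⟩⟩⟩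
      exacts [tailCodes_antitone (le_max_right N m) haN, tailCodes_antitone (le_max_left N m) haN]

theorem codeFamily_biInter_infinite (X : Set (ℕ → ℤ)) (t : Finset (Set (ℕ →₀ ℤ)))
    (ht : ↑t ⊆ codeFamily X) : (⋂ s ∈ t, s).Infinite := by
  obtain ⟨Y, N, hYN⟩ := exists_subset_biInter_of_subset_codeFamily t ht
  refine infinite_of_forall_inter_tailCodes_nonempty fun m => ?_
  obtain ⟨a, ha, haY⟩ := exists_mem_tailCodes_forall_mem_annihilators Y (max N m)
  exact ⟨a, hYN ⟨tailCodes_antitone (le_max_left N m) ha, Set.mem_iInter₂.2 haY⟩,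
    tailCodes_antitone (le_max_right N m) ha⟩

theorem exists_seq_pairwise_disjoint_support {A : Set (ℕ →₀ ℤ)}
    (hA : ∀ m, (A ∩ tailCodes m).Nonempty) :
    ∃ a : ℕ → ℕ →₀ ℤ, (∀ i, a i ∈ A ∧ a i ≠ 0) ∧
      Pairwise fun i j => Disjoint (a i).support (a j).support := by
  have : Std.Symm fun a b : ℕ →₀ ℤ => Disjoint a.support b.support := ⟨fun _ _ h => h.symm⟩
  refine exists_seq_of_forall_finset_exists' (fun a => a ∈ A ∧ a ≠ 0)
    (fun a b => Disjoint a.support b.support) fun s _ => ?_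
  obtain ⟨m, hm⟩ := exists_tailCodes_disjoint s
  obtain ⟨b, hbA, hb⟩ := hA m
  exact ⟨b, ⟨hbA, hb.2⟩, fun a ha => hm a ha b hb⟩

theorem Finsupp.injective_of_pairwise_disjoint_support {ι α M : Type*} [Zero M]
    {a : ι → α →₀ M} (ha : ∀ i, a i ≠ 0)
    (hdisj : Pairwise fun i j => Disjoint (a i).support (a j).support) : Injective a := by
  intro i j hij
  by_contra hne
  have hself : Disjoint (a i).support (a j).support := hdisj hne
  rw [hij, disjoint_self] at hself
  exact ha j (Finsupp.support_eq_empty.1 hself)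

theorem single_mem_speckerS (j : ℕ) (c : ℤ) : Pi.single j c ∈ SpeckerS :=
  (Set.finite_singleton j).subset Pi.support_single_subset

theorem speckerS_infinite : (SpeckerS : Set (ℕ → ℤ)).Infinite :=
  Set.infinite_of_injective_forall_mem (Pi.single_injective 0) (single_mem_speckerS 0)

noncomputable def codeHom (a : ℕ → ℕ →₀ ℤ) : (ℕ → ℤ) →+ (ℕ → ℤ) :=
  (LinearMap.pi fun i => (Finsupp.bilinearCombination ℤ ℤ).flip (a i)).toAddMonoidHom

theorem codeHom_apply (a : ℕ → ℕ →₀ ℤ) (x : ℕ → ℤ) (i : ℕ) :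
    codeHom a x i = Finsupp.linearCombination ℤ x (a i) :=
  rfl

theorem codeHom_mem_speckerS {a : ℕ → ℕ →₀ ℤ} (ha : Injective a) {A : Set (ℕ →₀ ℤ)}
    (haA : ∀ i, a i ∈ A) {x : ℕ → ℤ} (hx : (A \ annihilators x).Finite) :
    codeHom a x ∈ SpeckerS :=
  (hx.preimage ha.injOn).subset fun i hi => ⟨haA i, hi⟩

theorem codeHom_single {a : ℕ → ℕ →₀ ℤ}
    (hdisj : Pairwise fun i j => Disjoint (a i).support (a j).support) {i j : ℕ}
    (hj : j ∈ (a i).support) : codeHom a (Pi.single j 1) = Pi.single i (a i j) := by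
  classical
  ext i'
  rw [codeHom_apply, Finsupp.linearCombination_single_index, smul_eq_mul, mul_one]
  rcases eq_or_ne i' i with rfl | hne
  · rw [Pi.single_eq_same]
  · rw [Pi.single_eq_of_ne hne, ← Finsupp.notMem_support_iff]
    exact Finset.disjoint_right.1 (hdisj hne) hj

theorem aleph0_le_rank_map_codeHom {a : ℕ → ℕ →₀ ℤ} (ha : ∀ i, a i ≠ 0)
    (hdisj : Pairwise fun i j => Disjoint (a i).support (a j).support) :
    ℵ₀ ≤ Module.rank ℤ (SpeckerS.map (codeHom a)) := by
  choose j hj using fun i => Finsupp.support_nonempty_iff.2 (ha i)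
  have hmem : ∀ i, Pi.single i (a i (j i)) ∈ SpeckerS.map (codeHom a) := fun i =>
    ⟨Pi.single (j i) 1, single_mem_speckerS _ _, codeHom_single hdisj (hj i)⟩
  have hli := Pi.linearIndependent_single_of_ne_zero (R := ℤ)
    fun i => Finsupp.mem_support_iff.1 (hj i)
  set u : ℕ → SpeckerS.map (codeHom a) := fun i => ⟨_, hmem i⟩
  have hu : LinearIndependent ℤ u :=
    LinearIndependent.of_comp (SpeckerS.map (codeHom a)).subtype.toIntLinearMap hli
  exact hu.aleph0_le_rank

theorem stmt_18 (G : AddSubgroup (ℕ → ℤ)) (hSG : SpeckerS ≤ G)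
    (hcard : #G < pNumber) :
    ∃ f : (ℕ → ℤ) →+ (ℕ → ℤ),
      (∀ x ∈ G, f x ∈ SpeckerS) ∧
      ℵ₀ ≤ Module.rank ℤ (SpeckerS.map f) := by
  have hG : ℵ₀ ≤ #G := Cardinal.infinite_iff.1 (speckerS_infinite.mono hSG).to_subtype
  have hF : #(codeFamily G) < pNumber :=
    (mk_codeFamily_le G).trans_lt <| (Cardinal.add_eq_left hG hG).trans_lt hcard
  obtain ⟨A, hA, hAF⟩ :=
    exists_pseudoIntersection_of_mk_lt_pNumber hF (codeFamily_biInter_infinite G)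
  have hAtail : ∀ m, (A ∩ tailCodes m).Nonempty := fun m => by
    simpa only [Set.sdiff_sdiff_right_self] using (hA.sdiff (hAF _ (Or.inr ⟨m, rfl⟩))).nonempty
  obtain ⟨a, haA, hdisj⟩ := exists_seq_pairwise_disjoint_support hAtail
  have hinj := Finsupp.injective_of_pairwise_disjoint_support (fun i => (haA i).2) hdisj
  exact ⟨codeHom a, fun x hx => codeHom_mem_speckerS hinj (fun i => (haA i).1)
    (hAF _ (Or.inl ⟨x, hx, rfl⟩)), aleph0_le_rank_map_codeHom (fun i => (haA i).2) hdisj⟩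
end
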